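/- Measured hockey-stick divergence is dominated by the quantum hockey-stick divergence (Lemma 2): Let n be a nonempty finite type, let ρ, ρ' : Matrix n n ℂ be density matrices, let γ ≥ 1 be real, and let E : Fin m → Matrix n n ℂ be a POVM. Then ∑_{i : Fin m} max(0, Re(Tr(E i * ρ)) - γ * Re(Tr(E i * ρ'))) ≤ Re(Tr((ρ - γ • ρ')₊)), i.e. the hockey-stick divergence of the two measurement-outcome probability distributions is upper-bounded by the quantum hockey-stick divergence D_γ^q(ρ‖ρ') := Re(Tr((ρ - γ • ρ')₊)). -/

import Mathlib

/-!
Write `Δ = ρ - γ ρ'`. The outcome `i` contributes `max 0 (Re Tr(Eᵢ Δ))`, and both `0` and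
`Re Tr(Eᵢ Δ)` are at most `Re Tr(Eᵢ Δ₊)`, because `Δ₊` and `Δ₊ - Δ` are positive semidefinite
and the trace of a product of two positive semidefinite matrices is nonnegative.
Summing over `i` and using `∑ Eᵢ = 1` gives `Re Tr Δ₊`.
-/

open Matrix
open scoped ComplexOrder

/-- The positive part of a matrix, given by the continuous functional calculus
applied to `fun x => max x 0` (for a Hermitian matrix this replaces each
eigenvalue `x` in the spectral decomposition by `max x 0`). -/
noncomputable def matPosPart {n : Type*} [Fintype n] [DecidableEq n]
    (A : Matrix n n ℂ) : Matrix n n ℂ :=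
  cfc (fun x : ℝ => max x 0) A

open scoped MatrixOrder

namespace Matrix

variable {n : Type*} [Fintype n]

theorem PosSemidef.trace_mul_nonneg {𝕜 : Type*} [RCLike 𝕜] {A B : Matrix n n 𝕜}
    (hA : A.PosSemidef) (hB : B.PosSemidef) : 0 ≤ (A * B).trace := by
  classical
  obtain ⟨C, rfl⟩ := CStarAlgebra.nonneg_iff_eq_star_mul_self.mp hA.nonneg
  rw [mul_assoc, trace_mul_comm]
  exact (hB.mul_mul_conjTranspose_same C).trace_nonneg

theorem PosSemidef.re_trace_mul_nonneg {A B : Matrix n n ℂ}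
    (hA : A.PosSemidef) (hB : B.PosSemidef) : 0 ≤ (A * B).trace.re :=
  (Complex.nonneg_iff.mp (hA.trace_mul_nonneg hB)).1

theorem PosSemidef.max_zero_re_trace_mul_le_posPart [DecidableEq n] {B A : Matrix n n ℂ}
    (hB : B.PosSemidef) (hA : A.IsHermitian) : max 0 (B * A).trace.re ≤ (B * A⁺).trace.re := by
  have hgap : 0 ≤ (B * (A⁺ - A)).trace.re :=
    hB.re_trace_mul_nonneg (sub_nonneg.mpr (CFC.le_posPart hA.isSelfAdjoint)).posSemidef
  rw [mul_sub, trace_sub, Complex.sub_re] at hgap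
  exact max_le (hB.re_trace_mul_nonneg (CFC.posPart_nonneg A).posSemidef) (by linarith)

theorem sum_max_zero_re_trace_mul_le_re_trace_posPart [DecidableEq n] {ι : Type*} [Fintype ι]
    {E : ι → Matrix n n ℂ} (hE : ∀ i, (E i).PosSemidef) (hEsum : ∑ i, E i = 1)
    {A : Matrix n n ℂ} (hA : A.IsHermitian) :
    ∑ i, max 0 (E i * A).trace.re ≤ (A⁺).trace.re :=
  calc ∑ i, max 0 (E i * A).trace.re
      ≤ ∑ i, (E i * A⁺).trace.re :=
        Finset.sum_le_sum fun i _ ↦ (hE i).max_zero_re_trace_mul_le_posPart hA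
    _ = (A⁺).trace.re := by
        rw [← Complex.re_sum, ← trace_sum, ← Finset.sum_mul, hEsum, one_mul]

end Matrix

theorem matPosPart_eq_posPart {n : Type*} [Fintype n] [DecidableEq n] (A : Matrix n n ℂ) :
    matPosPart A = A⁺ :=
  (cfcₙ_eq_cfc (f := fun x : ℝ ↦ max x 0)).symm

theorem measured_hockeyStick_le_quantum_hockeyStick
    {n : Type*} [Fintype n] [DecidableEq n] {m : ℕ}
    (ρ ρ' : Matrix n n ℂ)
    (hρ : ρ.IsHermitian)
    (hρ' : ρ'.IsHermitian)
    (γ : ℝ)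
    (E : Fin m → Matrix n n ℂ) (hE : ∀ i, (E i).PosSemidef)
    (hEsum : ∑ i, E i = 1) :
    ∑ i, max 0 ((E i * ρ).trace.re - γ * (E i * ρ').trace.re)
      ≤ (matPosPart (ρ - γ • ρ')).trace.re := by
  have hΔ : (ρ - γ • ρ').IsHermitian := hρ.sub (hρ'.smul (IsSelfAdjoint.all γ))
  have hsummand : ∀ i, (E i * ρ).trace.re - γ * (E i * ρ').trace.re
      = (E i * (ρ - γ • ρ')).trace.re := fun i ↦ by
    simp [mul_sub, trace_sub, trace_smul]
  simp_rw [hsummand, matPosPart_eq_posPart]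
  exact sum_max_zero_re_trace_mul_le_re_trace_posPart hE hEsum hΔ
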